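/- arXiv:2011.02653 — 2 statements merged into one kernel-verified Lean document; each statement's English description precedes it below -/
import Mathlib

section
/- If X has the multinomial distribution with n trials and probability vector p, and φ : Z^n → R is a Schur-convex function, then ψ(p) = E_p[φ(X)] is a Schur-convex function of p. -/
/-!
Both sides are invariant under permuting coordinates, so we may sort `p` and `q` decreasingly;
then `p` majorizes `q` says that every prefix sum of `p` dominates the
corresponding prefix sum of `q`. Such a `p` is carried to `q` by finitely many transfers
`x ↦ x - δ eᵢ + δ eⱼ` with `xⱼ + δ ≤ xᵢ - δ`, each making one more coordinate agree with `q`.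
So it suffices that `ψ(p) = E_p φ(X)` does not increase along such a transfer. Differentiating
in `δ` and moving a single ball `b` between bins `i` and `j`, the derivative becomes a sum of
terms `(P - P') (φ(L + eⱼ) - φ(L + eᵢ))`, where `L` is the load of the other balls, `P` their
probability and `P'` the probability of the configuration with bins `i, j` relabelled. When
`Lᵢ ≥ Lⱼ` we have `P ≥ P'` (as `pᵢ ≥ pⱼ`) while `L + eᵢ` majorizes `L + eⱼ`, so each term is `≤ 0`.
-/

open Finset Function

noncomputable def topSum {n : ℕ} (x : Fin n → ℝ) (k : ℕ) : ℝ :=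
  sSup {t : ℝ | ∃ s : Finset (Fin n), s.card = k ∧ t = ∑ i ∈ s, x i}

def Majorizes {n : ℕ} (x y : Fin n → ℝ) : Prop :=
  (∀ k ≤ n, topSum y k ≤ topSum x k) ∧ ∑ i, x i = ∑ i, y i

/-- The load vector `X = (load ω 1, …, load ω n)` of `n` i.i.d. `p`-distributed trials is
multinomial with `n` trials and probabilities `p`. -/
def load {n : ℕ} (ω : Fin n → Fin n) (v : Fin n) : ℕ :=
  (Finset.univ.filter fun b => ω b = v).card

section Transfer

variable {ι : Type*} [DecidableEq ι]

def transfer (x : ι → ℝ) (i j : ι) (δ : ℝ) : ι → ℝ :=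
  x + δ • (Pi.single j 1 - Pi.single i 1)

variable {x : ι → ℝ} {i j : ι} {δ : ℝ}

lemma transfer_apply (v : ι) :
    transfer x i j δ v = x v + δ * ((Pi.single j 1 : ι → ℝ) v - (Pi.single i 1 : ι → ℝ) v) := rfl

@[simp]
lemma transfer_zero : transfer x i j 0 = x := by
  simp [transfer]

lemma transfer_apply_left (hij : i ≠ j) : transfer x i j δ i = x i - δ := by
  simp [transfer_apply, hij, sub_eq_add_neg]

lemma transfer_apply_right (hij : i ≠ j) : transfer x i j δ j = x j + δ := by
  simp [transfer_apply, hij.symm]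

lemma transfer_apply_of_ne {v : ι} (hi : v ≠ i) (hj : v ≠ j) : transfer x i j δ v = x v := by
  simp [transfer_apply, hi, hj]

lemma sum_transfer (s : Finset ι) :
    ∑ l ∈ s, transfer x i j δ l =
      ∑ l ∈ s, x l + ((if j ∈ s then δ else 0) - if i ∈ s then δ else 0) := by
  simp [transfer_apply, sum_add_distrib, mul_sub, sum_sub_distrib, ← mul_sum, sum_pi_single']

lemma transfer_nonneg (hx : 0 ≤ x) (hδ : 0 ≤ δ) (hδx : δ ≤ x i) :
    0 ≤ transfer x i j δ := fun l => by
  have hl := hx l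
  simp only [Pi.zero_apply, transfer_apply, Pi.single_apply] at hl ⊢
  split_ifs with h1 h2 <;> subst_vars <;> linarith

lemma card_ne_transfer_lt [Fintype ι] {y : ι → ℝ} (hi : x i ≠ y i) (hj : x j ≠ y j)
    (h : transfer x i j δ i = y i ∨ transfer x i j δ j = y j) :
    #{l | transfer x i j δ l ≠ y l} < #{l | x l ≠ y l} := by
  have hsub : ({l | transfer x i j δ l ≠ y l} : Finset ι) ⊆ ({l | x l ≠ y l} : Finset ι) := by
    intro l hl
    simp only [mem_filter, mem_univ, true_and] at hl ⊢
    by_cases hli : l = i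
    · exact hli ▸ hi
    by_cases hlj : l = j
    · exact hlj ▸ hj
    rwa [transfer_apply_of_ne hli hlj] at hl
  refine card_lt_card ((ssubset_iff_of_subset hsub).2 ?_)
  rcases h with h | h
  · exact ⟨i, by simpa using hi, by simpa using h⟩
  · exact ⟨j, by simpa using hj, by simpa using h⟩

end Transfer

lemma sum_le_sum_of_card_eq {α : Type*} {A B : Finset α} {f : α → ℝ} (hAB : #A = #B)
    (h : ∀ a ∈ A, ∀ b ∈ B, f a ≤ f b) : ∑ a ∈ A, f a ≤ ∑ b ∈ B, f b := by
  rcases B.eq_empty_or_nonempty with rfl | hB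
  · simp [card_eq_zero.1 hAB]
  calc ∑ a ∈ A, f a ≤ #A • B.inf' hB f := sum_le_card_nsmul _ _ _ fun a ha => le_inf' hB _ (h a ha)
    _ = #B • B.inf' hB f := by rw [hAB]
    _ ≤ ∑ b ∈ B, f b := card_nsmul_le_sum _ _ _ fun b hb => inf'_le _ hb

lemma Antitone.sum_le_sum_of_isLowerSet {ι : Type*} [LinearOrder ι] {x : ι → ℝ} (hx : Antitone x)
    {s t : Finset ι} (hs : IsLowerSet (s : Set ι)) (hts : #t = #s) :
    ∑ i ∈ t, x i ≤ ∑ i ∈ s, x i := by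
  rw [← sub_nonneg, ← sum_sdiff_sub_sum_sdiff, sub_nonneg]
  refine sum_le_sum_of_card_eq (card_sdiff_comm hts) fun a ha b hb => hx ?_
  rw [mem_sdiff] at ha hb
  exact le_of_lt (lt_of_not_ge fun hab => ha.2 (hs hab hb.1))

section Majorization

variable {n : ℕ}

lemma topSum_set_finite (x : Fin n → ℝ) (k : ℕ) :
    {t : ℝ | ∃ s : Finset (Fin n), #s = k ∧ t = ∑ i ∈ s, x i}.Finite :=
  (Set.finite_range fun s : Finset (Fin n) => ∑ i ∈ s, x i).subset
    fun _ ⟨s, _, ht⟩ => ⟨s, ht.symm⟩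

lemma sum_le_topSum (x : Fin n → ℝ) {s : Finset (Fin n)} : ∑ i ∈ s, x i ≤ topSum x #s :=
  le_csSup (topSum_set_finite x _).bddAbove ⟨s, rfl, rfl⟩

lemma exists_sum_eq_topSum (x : Fin n → ℝ) {k : ℕ} (hk : k ≤ n) :
    ∃ s : Finset (Fin n), #s = k ∧ topSum x k = ∑ i ∈ s, x i := by
  obtain ⟨s, -, hs⟩ := exists_subset_card_eq (s := (univ : Finset (Fin n))) (by simpa using hk)
  exact Set.Nonempty.csSup_mem (s := {t | ∃ s : Finset (Fin n), #s = k ∧ t = ∑ i ∈ s, x i})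
    ⟨_, s, hs, rfl⟩ (topSum_set_finite x k)

lemma topSum_comp_perm (x : Fin n → ℝ) (σ : Equiv.Perm (Fin n)) (k : ℕ) :
    topSum (x ∘ σ) k = topSum x k := by
  unfold topSum
  congr 1
  ext t
  constructor
  · rintro ⟨s, rfl, rfl⟩
    exact ⟨s.map σ.toEmbedding, card_map _, by simp⟩
  · rintro ⟨s, rfl, rfl⟩
    exact ⟨s.map σ.symm.toEmbedding, card_map _, by simp⟩

lemma Majorizes.comp_perm {x y : Fin n → ℝ} (h : Majorizes x y) (σ π : Equiv.Perm (Fin n)) :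
    Majorizes (x ∘ σ) (y ∘ π) :=
  ⟨fun k hk => by simpa only [topSum_comp_perm] using h.1 k hk,
    (Equiv.sum_comp σ x).trans (h.2.trans (Equiv.sum_comp π y).symm)⟩

lemma majorizes_comp_perm (x : Fin n → ℝ) (σ : Equiv.Perm (Fin n)) : Majorizes x (x ∘ σ) :=
  Majorizes.comp_perm (x := x) ⟨fun _ _ => le_rfl, rfl⟩ 1 σ

lemma majorizes_transfer (x : Fin n → ℝ) {i j : Fin n} {δ : ℝ} (hδ : 0 ≤ δ)
    (hδx : x j + δ ≤ x i) : Majorizes x (transfer x i j δ) := by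
  refine ⟨fun k hk => ?_, by simp [sum_transfer]⟩
  obtain ⟨s, rfl, hs⟩ := exists_sum_eq_topSum (transfer x i j δ) hk
  rw [hs, sum_transfer]
  by_cases hj : j ∈ s
  · by_cases hi : i ∈ s
    · simpa [hi, hj] using sum_le_topSum x
    · have hcard : #(insert i (s.erase j)) = #s := by
        rw [card_insert_of_notMem (by simp [hi]), card_erase_add_one hj]
      have := sum_le_topSum x (s := insert i (s.erase j))
      rw [hcard, sum_insert (by simp [hi])] at this
      rw [← add_sum_erase s x hj]
      simp only [hj, hi, if_true, if_false]
      linarith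
  · have := sum_le_topSum x (s := s)
    split_ifs <;> linarith

lemma Majorizes.sum_le_sum_of_isLowerSet {x y : Fin n → ℝ} (h : Majorizes x y) (hx : Antitone x)
    {s : Finset (Fin n)} (hs : IsLowerSet (s : Set (Fin n))) :
    ∑ i ∈ s, y i ≤ ∑ i ∈ s, x i := by
  obtain ⟨t, ht, hxt⟩ := exists_sum_eq_topSum x (card_le_univ s |>.trans_eq (Fintype.card_fin n))
  calc ∑ i ∈ s, y i ≤ topSum y #s := sum_le_topSum y
    _ ≤ topSum x #s := h.1 _ (card_le_univ s |>.trans_eq (Fintype.card_fin n))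
    _ = ∑ i ∈ t, x i := hxt
    _ ≤ ∑ i ∈ s, x i := hx.sum_le_sum_of_isLowerSet hs ht

lemma exists_antitone_comp_perm (x : Fin n → ℝ) : ∃ σ : Equiv.Perm (Fin n), Antitone (x ∘ σ) :=
  ⟨_, monotone_toDual_comp_iff.1 (Tuple.monotone_sort (OrderDual.toDual ∘ x))⟩

end Majorization

section Chain

variable {ι : Type*} [LinearOrder ι] [LocallyFiniteOrderBot ι] {x y : ι → ℝ} {i j : ι} {δ : ℝ}

lemma exists_adjacent_disagreement [Fintype ι] (hne : x ≠ y) (hsum : ∑ l, x l = ∑ l, y l)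
    (hxy : ∀ s : Finset ι, IsLowerSet (s : Set ι) → ∑ l ∈ s, y l ≤ ∑ l ∈ s, x l) :
    ∃ i j, i < j ∧ y i < x i ∧ x j < y j ∧ ∀ m, i < m → m < j → x m = y m := by
  obtain ⟨l, hl⟩ : ∃ l, x l < y l := by
    by_contra! h
    exact hne (funext fun l =>
      ((sum_eq_sum_iff_of_le fun l _ => h l).1 hsum.symm l (mem_univ l)).symm)
  have hS : ({l | x l < y l} : Finset ι).Nonempty := ⟨l, by simpa using hl⟩
  set j := ({l | x l < y l} : Finset ι).min' hS
  have hj : x j < y j := by simpa using min'_mem _ hS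
  have hIio : ∑ l ∈ Iio j, y l < ∑ l ∈ Iio j, x l := by
    have := hxy (Iic j) (by simpa using isLowerSet_Iic j)
    rw [Iic_eq_cons_Iio, sum_cons, sum_cons] at this
    linarith
  obtain ⟨m, hm, hym⟩ := exists_lt_of_sum_lt hIio
  have hT : ({l ∈ Iio j | y l < x l} : Finset ι).Nonempty := ⟨m, mem_filter.2 ⟨hm, hym⟩⟩
  set i := ({l ∈ Iio j | y l < x l} : Finset ι).max' hT
  obtain ⟨hij, hi⟩ := mem_filter.1 (max'_mem _ hT)
  refine ⟨i, j, mem_Iio.1 hij, hi, hj, fun m him hmj => le_antisymm ?_ ?_⟩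
  · exact not_lt.1 fun h => (le_max' _ m (mem_filter.2 ⟨mem_Iio.2 hmj, h⟩)).not_gt him
  · exact not_lt.1 fun h => (min'_le _ m (by simpa using h)).not_gt hmj

lemma sum_lowerSet_le_transfer (hij : i < j) (hδ : δ ≤ x i - y i)
    (hagree : ∀ m, i < m → m < j → x m = y m)
    (hxy : ∀ s : Finset ι, IsLowerSet (s : Set ι) → ∑ l ∈ s, y l ≤ ∑ l ∈ s, x l)
    (s : Finset ι) (hs : IsLowerSet (s : Set ι)) :
    ∑ l ∈ s, y l ≤ ∑ l ∈ s, transfer x i j δ l := by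
  rw [sum_transfer]
  by_cases hjs : j ∈ s
  · simpa [hjs, mem_coe.1 (hs hij.le hjs)] using hxy s hs
  by_cases his : i ∉ s
  · simpa [hjs, his] using hxy s hs
  rw [not_not] at his
  simp only [hjs, his, if_true, if_false]
  have hsub : Iic i ⊆ s := fun m hm => hs (mem_Iic.1 hm) his
  -- between `i` and `j` the two vectors agree, so `s` carries the same excess as `Iic i`
  have hagree' : ∑ l ∈ s \ Iic i, x l = ∑ l ∈ s \ Iic i, y l := by
    refine sum_congr rfl fun m hm => ?_
    obtain ⟨hms, hmi⟩ := mem_sdiff.1 hm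
    exact hagree m (lt_of_not_ge (by simpa using hmi)) (lt_of_not_ge fun hjm => hjs (hs hjm hms))
  have hIic (z : ι → ℝ) : ∑ l ∈ Iic i, z l = z i + ∑ l ∈ Iio i, z l := by
    rw [Iic_eq_cons_Iio, sum_cons]
  have hx := sum_sdiff hsub (f := x)
  have hy := sum_sdiff hsub (f := y)
  have hIio := hxy (Iio i) (by simpa using isLowerSet_Iio i)
  rw [hIic] at hx hy
  linarith

theorem apply_le_apply_of_sum_lowerSet_le [Fintype ι] (f : (ι → ℝ) → ℝ)
    (hf : ∀ x : ι → ℝ, 0 ≤ x → ∀ i j, i ≠ j → ∀ δ, 0 ≤ δ → x j + δ ≤ x i - δ →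
      f (transfer x i j δ) ≤ f x)
    (hy : Antitone y) (hy0 : 0 ≤ y) (hx0 : 0 ≤ x)
    (hxy : ∀ s : Finset ι, IsLowerSet (s : Set ι) → ∑ l ∈ s, y l ≤ ∑ l ∈ s, x l)
    (hsum : ∑ l, x l = ∑ l, y l) : f y ≤ f x := by
  induction hN : #{l | x l ≠ y l} using Nat.strong_induction_on generalizing x with
  | _ N ih =>
  rcases eq_or_ne x y with rfl | hne
  · rfl
  obtain ⟨i, j, hij, hi, hj, hagree⟩ := exists_adjacent_disagreement hne hsum hxy
  -- the largest admissible transfer; it makes `x` agree with `y` at `i` or at `j`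
  set δ := min (x i - y i) (y j - x j)
  have hδi : δ ≤ x i - y i := min_le_left _ _
  have hδj : δ ≤ y j - x j := min_le_right _ _
  have hδ0 : 0 ≤ δ := le_min (by linarith) (by linarith)
  have hyji : y j ≤ y i := hy hij.le
  have hyi : 0 ≤ y i := hy0 i
  have hx'0 : 0 ≤ transfer x i j δ := transfer_nonneg hx0 hδ0 (by linarith)
  have hcard := card_ne_transfer_lt hi.ne' hj.ne (by
    rcases min_choice (x i - y i) (y j - x j) with h | h
    · left; rw [transfer_apply_left hij.ne]; linarith
    · right; rw [transfer_apply_right hij.ne]; linarith)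
  calc f y ≤ f (transfer x i j δ) :=
        ih _ (hN ▸ hcard) hx'0 (sum_lowerSet_le_transfer hij hδi hagree hxy)
          (by simpa [sum_transfer] using hsum) rfl
    _ ≤ f x := hf x hx0 i j hij.ne δ hδ0 (by linarith)

end Chain

lemma sum_single_sub_single_mul {β ι : Type*} [Fintype β] [DecidableEq β] [Fintype ι]
    [DecidableEq ι] (G : (β → ι) → ℝ) (b : β) (i j : ι) :
    ∑ ω, (Pi.single j 1 - Pi.single i 1 : ι → ℝ) (ω b) * G ω =
      ∑ ω with ω b = i, (G (update ω b j) - G ω) := by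
  have hfiber (v : ι) :
      ∑ ω with ω b = v, G ω = ∑ ω with ω b = i, G (update ω b v) :=
    sum_nbij' (update · b i) (update · b v) (by simp) (by simp)
      (fun ω hω => by simp [← (mem_filter.1 hω).2]) (fun ω hω => by simp_all)
      (fun ω hω => by simp [← (mem_filter.1 hω).2])
  rw [sum_sub_distrib, ← hfiber]
  simp [Pi.single_apply, sub_mul, sum_sub_distrib, sum_filter]

lemma pow_mul_pow_le_pow_mul_pow {u v : ℝ} (hv : 0 ≤ v) (hvu : v ≤ u) {a c : ℕ} (hca : c ≤ a) :
    v ^ a * u ^ c ≤ u ^ a * v ^ c := by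
  obtain ⟨d, rfl⟩ := Nat.exists_eq_add_of_le hca
  have huv : 0 ≤ v ^ c * u ^ c := mul_nonneg (pow_nonneg hv c) (pow_nonneg (hv.trans hvu) c)
  calc v ^ (c + d) * u ^ c = v ^ c * u ^ c * v ^ d := by ring
    _ ≤ v ^ c * u ^ c * u ^ d := by gcongr
    _ = u ^ (c + d) * v ^ c := by ring

lemma prod_comp_swap_le {β ι : Type*} [DecidableEq ι] {s : Finset β} {g : β → ι} {r : ι → ℝ}
    {i j : ι} (hr : 0 ≤ r) (hij : i ≠ j) (hji : r j ≤ r i)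
    (hc : #{b ∈ s | g b = j} ≤ #{b ∈ s | g b = i}) :
    ∏ b ∈ s, r (Equiv.swap i j (g b)) ≤ ∏ b ∈ s, r (g b) := by
  have hsplit (F : ι → ℝ) : ∏ b ∈ s, F (g b) = F i ^ #{b ∈ s | g b = i} *
      F j ^ #{b ∈ s | g b = j} * ∏ b ∈ s with g b ≠ i ∧ g b ≠ j, F (g b) := by
    rw [← prod_filter_mul_prod_filter_not s (g · = i),
      ← prod_filter_mul_prod_filter_not (s.filter (g · ≠ i)) (g · = j), filter_filter,
      filter_filter, mul_assoc, prod_eq_pow_card fun b hb => by rw [(mem_filter.1 hb).2]]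
    congr 2
    rw [prod_eq_pow_card fun b hb => by rw [(mem_filter.1 hb).2.2]]
    congr 2
    exact filter_congr fun b _ => ⟨fun h => h.2, fun h => ⟨h ▸ hij.symm, h⟩⟩
  have hsplit' := hsplit (r ∘ Equiv.swap i j)
  simp only [Function.comp_apply, Equiv.swap_apply_left, Equiv.swap_apply_right] at hsplit'
  rw [hsplit', hsplit r, prod_congr rfl fun b hb => by
    rw [Equiv.swap_apply_of_ne_of_ne (mem_filter.1 hb).2.1 (mem_filter.1 hb).2.2]]
  exact mul_le_mul_of_nonneg_right (pow_mul_pow_le_pow_mul_pow (hr j) hji hc)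
    (prod_nonneg fun b _ => hr _)

section LoadExpectation

variable {n : ℕ} {φ : (Fin n → ℕ) → ℝ} {i j : Fin n}

def IsSchurConvex (φ : (Fin n → ℕ) → ℝ) : Prop :=
  ∀ a b : Fin n → ℕ, Majorizes (fun i => (a i : ℝ)) (fun i => (b i : ℝ)) → φ b ≤ φ a

lemma load_update (ω : Fin n → Fin n) (b v w : Fin n) :
    load (update ω b v) w = #{b' ∈ univ.erase b | ω b' = w} + if v = w then 1 else 0 := by
  unfold load
  simp only [card_filter]
  rw [← add_sum_erase _ _ (mem_univ b), update_self, add_comm]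
  exact congrArg (· + _) (sum_congr rfl fun b' hb' => by
    rw [update_of_ne (ne_of_mem_erase hb')])

lemma load_comp_perm (σ : Equiv.Perm (Fin n)) (ω : Fin n → Fin n) :
    load (σ ∘ ω) = load ω ∘ σ.symm := by
  funext v
  simp [load, Equiv.eq_symm_apply]

lemma IsSchurConvex.comp_perm (hφ : IsSchurConvex φ) (a : Fin n → ℕ) (σ : Equiv.Perm (Fin n)) :
    φ (a ∘ σ) = φ a := by
  refine le_antisymm (hφ _ _ (majorizes_comp_perm _ σ)) (hφ _ _ ?_)
  simpa [Function.comp_def] using majorizes_comp_perm (fun i => ((a ∘ σ) i : ℝ)) σ.symm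

lemma IsSchurConvex.load_update_le (hφ : IsSchurConvex φ) (hij : i ≠ j) (ω : Fin n → Fin n)
    (b : Fin n) (h : #{b' ∈ univ.erase b | ω b' = j} ≤ #{b' ∈ univ.erase b | ω b' = i}) :
    φ (load (update ω b j)) ≤ φ (load (update ω b i)) := by
  refine hφ _ _ ?_
  have htransfer : (fun w => (load (update ω b j) w : ℝ)) =
      transfer (fun w => (load (update ω b i) w : ℝ)) i j 1 := by
    funext w
    simp only [transfer_apply, load_update, Pi.single_apply]
    split_ifs <;> subst_vars <;> simp_all
  rw [htransfer]
  exact majorizes_transfer _ zero_le_one (by simp [load_update, hij]; exact_mod_cast h)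

noncomputable def loadExpectation (φ : (Fin n → ℕ) → ℝ) (p : Fin n → ℝ) : ℝ :=
  ∑ ω : Fin n → Fin n, (∏ b, p (ω b)) * φ (load ω)

lemma loadExpectation_comp_perm (hφ : IsSchurConvex φ) (p : Fin n → ℝ)
    (σ : Equiv.Perm (Fin n)) : loadExpectation φ (p ∘ σ) = loadExpectation φ p :=
  Fintype.sum_equiv ((Equiv.refl _).arrowCongr σ) _ _ fun ω => by
    change _ = (∏ b, p (σ (ω b))) * φ (load (σ ∘ ω))
    rw [load_comp_perm, hφ.comp_perm]
    rfl

lemma IsSchurConvex.prod_sub_mul_sub_nonpos (hφ : IsSchurConvex φ) (hij : i ≠ j) {r : Fin n → ℝ}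
    (hr : 0 ≤ r) (hji : r j ≤ r i) (ω : Fin n → Fin n) (b : Fin n) :
    (∏ b' ∈ univ.erase b, r (ω b') - ∏ b' ∈ univ.erase b, r (Equiv.swap i j (ω b'))) *
      (φ (load (update ω b j)) - φ (load (update ω b i))) ≤ 0 := by
  rcases le_total #{b' ∈ univ.erase b | ω b' = j} #{b' ∈ univ.erase b | ω b' = i} with h | h
  · exact mul_nonpos_of_nonneg_of_nonpos (sub_nonneg.2 (prod_comp_swap_le hr hij hji h))
      (sub_nonpos.2 (hφ.load_update_le hij ω b h))
  · have hswap := prod_comp_swap_le (s := univ.erase b) (g := Equiv.swap i j ∘ ω) hr hij hji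
      (by simpa [Equiv.swap_apply_eq_iff] using h)
    simp only [Function.comp_apply, Equiv.swap_apply_self] at hswap
    exact mul_nonpos_of_nonpos_of_nonneg (sub_nonpos.2 hswap)
      (sub_nonneg.2 (hφ.load_update_le hij.symm ω b h))

lemma IsSchurConvex.sum_prod_erase_mul_nonpos (hφ : IsSchurConvex φ) (hij : i ≠ j)
    {r : Fin n → ℝ} (hr : 0 ≤ r) (hji : r j ≤ r i) (b : Fin n) :
    ∑ ω : Fin n → Fin n, (∏ b' ∈ univ.erase b, r (ω b')) *
      (Pi.single j 1 - Pi.single i 1 : Fin n → ℝ) (ω b) * φ (load ω) ≤ 0 := by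
  set e : Fin n → ℝ := Pi.single j 1 - Pi.single i 1
  set τ := Equiv.swap i j
  set R : (Fin n → Fin n) → ℝ := fun ω => ∏ b' ∈ univ.erase b, r (ω b')
  have hR (ω : Fin n → Fin n) (v : Fin n) : R (update ω b v) = R ω :=
    prod_congr rfl fun b' hb' => by rw [update_of_ne (ne_of_mem_erase hb')]
  -- relabelling the bins by `τ` reverses `e` and leaves `φ ∘ load` unchanged
  have hrelabel : ∑ ω, R ω * e (ω b) * φ (load ω) = -∑ ω, R (τ ∘ ω) * e (ω b) * φ (load ω) := by
    rw [← sum_neg_distrib]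
    refine Fintype.sum_equiv ((Equiv.refl _).arrowCongr τ) _ _ fun ω => ?_
    change _ = -(R (τ ∘ τ ∘ ω) * e (τ (ω b)) * φ (load (τ ∘ ω)))
    rw [load_comp_perm, hφ.comp_perm, ← Function.comp_assoc, ← Equiv.Perm.coe_mul,
      Equiv.swap_mul_self, Equiv.Perm.coe_one, Function.id_comp]
    simp only [e, τ, Pi.sub_apply, Pi.single_apply, Equiv.swap_apply_eq_iff,
      Equiv.swap_apply_left, Equiv.swap_apply_right]
    ring
  have htwice : 2 * ∑ ω, R ω * e (ω b) * φ (load ω) = ∑ ω with ω b = i,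
      (R ω - R (τ ∘ ω)) * (φ (load (update ω b j)) - φ (load (update ω b i))) := by
    rw [two_mul]
    nth_rewrite 2 [hrelabel]
    rw [← sub_eq_add_neg, ← sum_sub_distrib, sum_congr rfl fun ω _ =>
      (by ring : R ω * e (ω b) * φ (load ω) - R (τ ∘ ω) * e (ω b) * φ (load ω) =
        e (ω b) * (φ (load ω) * (R ω - R (τ ∘ ω)))), sum_single_sub_single_mul]
    refine sum_congr rfl fun ω hω => ?_
    rw [comp_update, hR, hR, ← (mem_filter.1 hω).2, update_eq_self]
    ring
  have hnonpos : ∑ ω with ω b = i, (R ω - R (τ ∘ ω)) *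
      (φ (load (update ω b j)) - φ (load (update ω b i))) ≤ 0 :=
    sum_nonpos fun ω _ => hφ.prod_sub_mul_sub_nonpos hij hr hji ω b
  change ∑ ω, R ω * e (ω b) * φ (load ω) ≤ 0
  linarith

lemma hasDerivAt_loadExpectation_transfer (φ : (Fin n → ℕ) → ℝ) (p : Fin n → ℝ) (i j : Fin n)
    (t : ℝ) :
    HasDerivAt (fun t => loadExpectation φ (transfer p i j t))
      (∑ ω : Fin n → Fin n, (∑ b, (∏ b' ∈ univ.erase b, transfer p i j t (ω b')) *
        (Pi.single j 1 - Pi.single i 1 : Fin n → ℝ) (ω b)) * φ (load ω)) t := by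
  unfold loadExpectation
  refine HasDerivAt.fun_sum fun ω _ => HasDerivAt.mul_const ?_ _
  have := HasDerivAt.fun_finsetProd (u := univ) (f := fun b t => transfer p i j t (ω b)) (x := t)
    (f' := fun b => (Pi.single j 1 - Pi.single i 1 : Fin n → ℝ) (ω b)) fun b _ => by
      simpa [transfer_apply] using ((hasDerivAt_id t).mul_const _).const_add (p (ω b))
  simpa [smul_eq_mul] using this

lemma IsSchurConvex.loadExpectation_transfer_le (hφ : IsSchurConvex φ) (hij : i ≠ j)
    {p : Fin n → ℝ} (hp : 0 ≤ p) {δ : ℝ} (hδ : 0 ≤ δ) (hδp : p j + δ ≤ p i - δ) :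
    loadExpectation φ (transfer p i j δ) ≤ loadExpectation φ p := by
  have hderiv := hasDerivAt_loadExpectation_transfer φ p i j
  have hanti : AntitoneOn (fun t => loadExpectation φ (transfer p i j t)) (Set.Icc 0 δ) := by
    refine antitoneOn_of_hasDerivWithinAt_nonpos (convex_Icc 0 δ)
      (fun t _ => (hderiv t).continuousAt.continuousWithinAt)
      (fun t _ => (hderiv t).hasDerivWithinAt) fun t ht => ?_
    rw [interior_Icc] at ht
    have hpj : 0 ≤ p j := hp j
    have hr : 0 ≤ transfer p i j t := transfer_nonneg hp ht.1.le (by linarith [ht.2])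
    have hji : transfer p i j t j ≤ transfer p i j t i := by
      rw [transfer_apply_left hij, transfer_apply_right hij]
      linarith [ht.2]
    simp_rw [sum_mul]
    rw [sum_comm]
    exact sum_nonpos fun b _ => hφ.sum_prod_erase_mul_nonpos hij hr hji b
  simpa using hanti ⟨le_rfl, hδ⟩ ⟨hδ, le_rfl⟩ hδ

end LoadExpectation

theorem expectation_schurConvex_of_schurConvex_general {n : ℕ}
    (φ : (Fin n → ℕ) → ℝ)
    (hφ : ∀ a b : Fin n → ℕ,
      Majorizes (fun i => (a i : ℝ)) (fun i => (b i : ℝ)) → φ b ≤ φ a)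
    (p q : Fin n → ℝ) (hp : ∀ i, 0 ≤ p i)
    (hq : ∀ i, 0 ≤ q i)
    (hpq : Majorizes p q) :
    ∑ ω : Fin n → Fin n, (∏ b, q (ω b)) * φ (load ω) ≤
      ∑ ω : Fin n → Fin n, (∏ b, p (ω b)) * φ (load ω) := by
  obtain ⟨σ, hσ⟩ := exists_antitone_comp_perm p
  obtain ⟨π, hπ⟩ := exists_antitone_comp_perm q
  have hsorted := hpq.comp_perm σ π
  have key : loadExpectation φ (q ∘ π) ≤ loadExpectation φ (p ∘ σ) :=
    apply_le_apply_of_sum_lowerSet_le (loadExpectation φ)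
      (fun _ hx _ _ hij _ hδ hδx => IsSchurConvex.loadExpectation_transfer_le hφ hij hx hδ hδx)
      hπ (fun _ => hq _) (fun _ => hp _)
      (fun _ hs => hsorted.sum_le_sum_of_isLowerSet hσ hs) hsorted.2
  rwa [loadExpectation_comp_perm hφ q π, loadExpectation_comp_perm hφ p σ] at key

/-- If `X` is multinomial with `n` trials and probability vector `p`, and
`φ : ℤ^n → ℝ` (here: on nonnegative integer vectors) is Schur-convex, then
`ψ(p) = E_p[φ(X)]` is a Schur-convex function of `p`. -/
theorem expectation_schurConvex_of_schurConvex {n : ℕ} (hn : 0 < n)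
    (φ : (Fin n → ℕ) → ℝ)
    (hφ : ∀ a b : Fin n → ℕ,
      Majorizes (fun i => (a i : ℝ)) (fun i => (b i : ℝ)) → φ b ≤ φ a)
    (p q : Fin n → ℝ) (hp : ∀ i, 0 ≤ p i) (hpsum : ∑ i, p i = 1)
    (hq : ∀ i, 0 ≤ q i) (hqsum : ∑ i, q i = 1)
    (hpq : Majorizes p q) :
    ∑ ω : Fin n → Fin n, (∏ b, q (ω b)) * φ (load ω) ≤
      ∑ ω : Fin n → Fin n, (∏ b, p (ω b)) * φ (load ω) :=
  expectation_schurConvex_of_schurConvex_general φ hφ p q hp hq hpq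
end

section
/- Let n balls be thrown into n bins independently, each ball landing in bin i with probability p_i for an arbitrary probability vector p. Then the expected maximum load satisfies E_p[max load] ≥ k_0 · log n / log log n as n → ∞, for some absolute constant k_0 > 0. -/
/-- The maximum bin load. -/
def maxLoad {n : ℕ} (ω : Fin n → Fin n) : ℕ :=
  Finset.univ.sup (load ω)

/-- Expected maximum load when each of `n` balls independently lands in bin `i`
with probability `p i` (the load vector is multinomial `(n, p)`). -/
noncomputable def expMaxLoad {n : ℕ} (p : Fin n → ℝ) : ℝ :=
  ∑ ω : Fin n → Fin n, (∏ b, p (ω b)) * (maxLoad ω : ℝ)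

/-!
Second-moment method. For `m` of order `log n / log log n`, let `Z` count the pairs
(bin `a`, `m`-set `S` of balls) with every ball of `S` in `a`; `Z > 0` forces a bin of load `≥ m`.
If some `p a ≥ m / n`, bin `a` alone has expected load `≥ m`. Otherwise
`𝔼 Z = C(n, m) ∑ p_a ^ m ≥ (n / m) ^ m n ^ (1 - m) ≥ 2 (m + 1) ^ m`. Two crowded sets in
different bins must be disjoint, and are then independent, while pairs in a common bin contribute
at most `𝔼 Z · (m + 1) ^ m` because `p_a ≤ m / n`; so `𝔼 Z² ≤ (𝔼 Z)² + 𝔼 Z · (m + 1) ^ m` and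
Cauchy–Schwarz gives `P(Z > 0) ≥ (𝔼 Z)² / 𝔼 Z² ≥ 2 / 3`.
-/

open Finset

theorem Nat.pow_le_pow_mul_choose {n k : ℕ} (h : k ≤ n) : n ^ k ≤ k ^ k * n.choose k := by
  induction k generalizing n with
  | zero => simp
  | succ k ih =>
    obtain ⟨n, rfl⟩ : ∃ n', n = n' + 1 := ⟨n - 1, by omega⟩
    have hstep : (n + 1) ^ k ≤ (k + 1) ^ k * n.choose k := by
      refine Nat.le_of_mul_le_mul_right ?_ (Nat.pow_self_pos (n := k))
      calc (n + 1) ^ k * k ^ k = ((n + 1) * k) ^ k := (mul_pow ..).symm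
        _ ≤ ((k + 1) * n) ^ k := Nat.pow_le_pow_left (by nlinarith) k
        _ = (k + 1) ^ k * n ^ k := mul_pow ..
        _ ≤ (k + 1) ^ k * (k ^ k * n.choose k) := Nat.mul_le_mul_left _ (ih (by omega))
        _ = (k + 1) ^ k * n.choose k * k ^ k := by ring
    calc (n + 1) ^ (k + 1) = (n + 1) ^ k * (n + 1) := pow_succ ..
      _ ≤ (k + 1) ^ k * n.choose k * (n + 1) := Nat.mul_le_mul_right _ hstep
      _ = (k + 1) ^ k * ((n + 1) * n.choose k) := by ring
      _ = (k + 1) ^ (k + 1) * (n + 1).choose (k + 1) := by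
        rw [Nat.add_one_mul_choose_eq]; ring

theorem sum_mul_card_filter {ι γ R : Type*} [Fintype γ] [NonAssocSemiring R] (s : Finset ι)
    (P : ι → γ → Prop) [∀ i x, Decidable (P i x)] (w : γ → R) :
    ∑ x, w x * #{i ∈ s | P i x} = ∑ i ∈ s, ∑ x with P i x, w x := by
  simp only [card_filter, Nat.cast_sum, Nat.cast_ite, Nat.cast_one, Nat.cast_zero, mul_sum,
    mul_boole, sum_filter]
  exact sum_comm

theorem sq_sum_mul_le_sum_filter_ne_zero_mul_sum_mul_sq {γ : Type*} (s : Finset γ) {w : γ → ℝ}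
    (Z : γ → ℝ) (hw : ∀ x ∈ s, 0 ≤ w x) :
    (∑ x ∈ s, w x * Z x) ^ 2 ≤ (∑ x ∈ s with Z x ≠ 0, w x) * ∑ x ∈ s, w x * Z x ^ 2 := by
  have hw' : ∀ x ∈ s.filter (Z · ≠ 0), 0 ≤ w x := fun x hx => hw x (mem_filter.1 hx).1
  rw [← sum_filter_of_ne (p := (Z · ≠ 0)) fun x _ h => right_ne_zero_of_mul h]
  calc _ ≤ (∑ x ∈ s with Z x ≠ 0, w x) * ∑ x ∈ s with Z x ≠ 0, w x * Z x ^ 2 :=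
        sum_sq_le_sum_mul_sum_of_sq_le_mul _ hw' (fun x hx => by have := hw' x hx; positivity)
          fun x _ => by ring_nf; rfl
    _ ≤ _ := mul_le_mul_of_nonneg_left (sum_le_sum_of_subset_of_nonneg (filter_subset _ _)
        fun x hx _ => by have := hw x hx; positivity) (sum_nonneg hw')

section Cylinder

variable {α β : Type*} [Fintype α] [DecidableEq α] [Fintype β] [DecidableEq β] {p : α → ℝ}

theorem sum_prod_filter_forall_mem_eq (hp : ∑ a, p a = 1) (S : Finset β) (c : β → α) :
    ∑ ω : β → α with ∀ b ∈ S, ω b = c b, ∏ b, p (ω b) = ∏ b ∈ S, p (c b) := by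
  have hcyl : ({ω : β → α | ∀ b ∈ S, ω b = c b} : Finset (β → α))
      = Fintype.piFinset fun b => if b ∈ S then {c b} else univ := by
    ext ω
    simp only [mem_filter, mem_univ, true_and, Fintype.mem_piFinset]
    refine forall_congr' fun b => ?_
    split_ifs with hb <;> simp [hb]
  rw [hcyl, ← prod_univ_sum, ← Fintype.prod_ite_mem S]
  refine prod_congr rfl fun b _ => ?_
  split_ifs <;> simp [hp]

end Cylinder

section Crowded

variable {α β : Type*} [Fintype α] [Fintype β]

theorem sum_product_powersetCard_pow (p : α → ℝ) (m : ℕ) :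
    ∑ q ∈ (univ : Finset α) ×ˢ powersetCard m (univ : Finset β), p q.1 ^ m
      = (Fintype.card β).choose m * ∑ a, p a ^ m := by
  simp [sum_product, card_powersetCard, mul_sum]

variable [DecidableEq α] [DecidableEq β] {p : α → ℝ}

def crowdedSets (m : ℕ) (ω : β → α) : Finset (α × Finset β) :=
  {q ∈ univ ×ˢ powersetCard m univ | ∀ b ∈ q.2, ω b = q.1}

theorem mem_crowdedSets {m : ℕ} {ω : β → α} {q : α × Finset β} :
    q ∈ crowdedSets m ω ↔ #q.2 = m ∧ ∀ b ∈ q.2, ω b = q.1 := by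
  simp [crowdedSets, mem_powersetCard]

-- `T` is recovered from `T \ S`, an `(m - #A)`-set, as `(T \ S) ∪ A`.
theorem card_powersetCard_filter_inter_eq_le {m : ℕ} {S A : Finset β} :
    #{T ∈ powersetCard m univ | S ∩ T = A} ≤ Fintype.card β ^ (m - #A) :=
  calc _ ≤ #(powersetCard (m - #A) (univ : Finset β)) := by
        refine card_le_card_of_injOn (· \ S) (fun T hT => ?_) fun T hT T' hT' hTT' => ?_
        · obtain ⟨hTm, rfl⟩ := mem_filter.1 (mem_coe.1 hT)
          have := card_sdiff_add_card_inter T S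
          rw [inter_comm, (mem_powersetCard.1 hTm).2] at this
          simp only [mem_coe, mem_powersetCard]
          exact ⟨subset_univ _, by omega⟩
        · rw [← sdiff_union_inter T S, ← sdiff_union_inter T' S, inter_comm T, inter_comm T',
            (mem_filter.1 hT).2, (mem_filter.1 hT').2]
          exact congrArg (· ∪ A) hTT'
    _ = (Fintype.card β).choose (m - #A) := by simp
    _ ≤ _ := Nat.choose_le_pow _ _

theorem sum_powersetCard_pow_sub_card_inter_le {x : ℝ} (hx0 : 0 ≤ x) {m : ℕ}
    (hxm : Fintype.card β * x ≤ m) {S : Finset β} (hS : #S = m) :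
    ∑ T ∈ powersetCard m (univ : Finset β), x ^ (m - #(S ∩ T)) ≤ ((m : ℝ) + 1) ^ m := by
  rw [← sum_fiberwise_of_maps_to (g := (S ∩ ·)) (t := S.powerset)
    fun T _ => mem_powerset.2 inter_subset_left]
  have hfiber : ∀ A ∈ S.powerset,
      ∑ T ∈ powersetCard m univ with S ∩ T = A, x ^ (m - #(S ∩ T)) ≤ (m : ℝ) ^ (m - #A) := by
    intro A _
    calc ∑ T ∈ powersetCard m univ with S ∩ T = A, x ^ (m - #(S ∩ T))
        = #{T ∈ powersetCard m univ | S ∩ T = A} * x ^ (m - #A) := by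
          rw [sum_congr rfl fun T hT => by rw [(mem_filter.1 hT).2], sum_const, nsmul_eq_mul]
      _ ≤ (Fintype.card β : ℝ) ^ (m - #A) * x ^ (m - #A) := by
          gcongr; exact_mod_cast card_powersetCard_filter_inter_eq_le
      _ = (Fintype.card β * x) ^ (m - #A) := (mul_pow ..).symm
      _ ≤ (m : ℝ) ^ (m - #A) := by gcongr
  calc _ ≤ ∑ A ∈ S.powerset, (m : ℝ) ^ (m - #A) := sum_le_sum hfiber
    _ = ((m : ℝ) + 1) ^ m := by
      rw [sum_powerset_apply_card (fun k => (m : ℝ) ^ (m - k)), hS, add_comm (m : ℝ) 1, add_pow]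
      exact sum_congr rfl fun k _ => by rw [nsmul_eq_mul, one_pow, one_mul, mul_comm]

theorem sum_prod_mul_card_crowdedSets (hp : ∑ a, p a = 1) (m : ℕ) :
    ∑ ω : β → α, (∏ b, p (ω b)) * #(crowdedSets m ω)
      = (Fintype.card β).choose m * ∑ a, p a ^ m := by
  rw [← sum_product_powersetCard_pow]
  have h := sum_mul_card_filter ((univ : Finset α) ×ˢ powersetCard m (univ : Finset β))
    (fun q (ω : β → α) => ∀ b ∈ q.2, ω b = q.1) fun ω => ∏ b, p (ω b)
  refine h.trans (sum_congr rfl fun q hq => ?_)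
  rw [sum_prod_filter_forall_mem_eq hp q.2 fun _ => q.1, prod_const,
    (mem_powersetCard.1 (mem_product.1 hq).2).2]

theorem sum_prod_filter_crowded_pair_le (hp0 : ∀ a, 0 ≤ p a) (hp : ∑ a, p a = 1) {x : ℝ}
    (hx : ∀ a, p a ≤ x) {m : ℕ} {S T : Finset β} (hS : #S = m) (hT : #T = m) (a a' : α) :
    ∑ ω : β → α with (∀ b ∈ S, ω b = a) ∧ ∀ b ∈ T, ω b = a', ∏ b, p (ω b)
      ≤ p a ^ m * p a' ^ m + if a = a' then p a ^ m * x ^ (m - #(S ∩ T)) else 0 := by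
  by_cases haa : a = a'
  · subst haa
    have hunion : #(S ∪ T) = m + (m - #(S ∩ T)) := by
      have := card_union_add_card_inter S T
      have := card_le_card (inter_subset_left (s₁ := S) (s₂ := T))
      omega
    have hevent := sum_prod_filter_forall_mem_eq hp (S ∪ T) fun _ => a
    simp only [forall_mem_union, prod_const, hunion, pow_add] at hevent
    rw [hevent, if_pos rfl]
    have := pow_le_pow_left₀ (hp0 a) (hx a) (m - #(S ∩ T))
    have := pow_nonneg (hp0 a) m
    nlinarith
  rw [if_neg haa, add_zero]
  by_cases hST : Disjoint S T
  · have hevent := sum_prod_filter_forall_mem_eq hp (S ∪ T) fun b => if b ∈ S then a else a'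
    have hSprod : ∏ b ∈ S, p (if b ∈ S then a else a') = p a ^ m := by
      rw [← hS, ← prod_const]; exact prod_congr rfl fun b hb => by rw [if_pos hb]
    have hTprod : ∏ b ∈ T, p (if b ∈ S then a else a') = p a' ^ m := by
      rw [← hT, ← prod_const]
      exact prod_congr rfl fun b hb => by rw [if_neg (disjoint_right.1 hST hb)]
    rw [prod_union hST, hSprod, hTprod] at hevent
    rw [← hevent]
    refine le_of_eq (sum_congr ?_ fun _ _ => rfl)
    ext ω
    simp only [mem_filter, mem_univ, true_and, forall_mem_union]
    constructor
    · rintro ⟨hωS, hωT⟩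
      exact ⟨fun b hb => by simp [hb, hωS b hb],
        fun b hb => by simp [disjoint_right.1 hST hb, hωT b hb]⟩
    · rintro ⟨hωS, hωT⟩
      exact ⟨fun b hb => by simpa [hb] using hωS b hb,
        fun b hb => by simpa [disjoint_right.1 hST hb] using hωT b hb⟩
  · obtain ⟨b, hbS, hbT⟩ := not_disjoint_iff.1 hST
    have hempty : ({ω : β → α | (∀ b ∈ S, ω b = a) ∧ ∀ b ∈ T, ω b = a'} : Finset (β → α)) = ∅ :=
      filter_false_of_mem fun ω _ ⟨hωS, hωT⟩ => haa ((hωS b hbS).symm.trans (hωT b hbT))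
    rw [hempty, sum_empty]
    exact mul_nonneg (pow_nonneg (hp0 a) m) (pow_nonneg (hp0 a') m)

theorem sum_prod_mul_card_crowdedSets_sq_le (hp0 : ∀ a, 0 ≤ p a) (hp : ∑ a, p a = 1) {x : ℝ}
    (hx0 : 0 ≤ x) (hx : ∀ a, p a ≤ x) {m : ℕ} (hxm : Fintype.card β * x ≤ m) :
    ∑ ω : β → α, (∏ b, p (ω b)) * (#(crowdedSets m ω) : ℝ) ^ 2
      ≤ ((Fintype.card β).choose m * ∑ a, p a ^ m) ^ 2
        + ((Fintype.card β).choose m * ∑ a, p a ^ m) * ((m : ℝ) + 1) ^ m := by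
  set I := (univ : Finset α) ×ˢ powersetCard m (univ : Finset β)
  have hcardI : ∀ q ∈ I, #q.2 = m := fun q hq => (mem_powersetCard.1 (mem_product.1 hq).2).2
  have hsq : ∀ ω : β → α, (#(crowdedSets m ω) : ℝ) ^ 2 = #{qr ∈ I ×ˢ I |
      (∀ b ∈ qr.1.2, ω b = qr.1.1) ∧ ∀ b ∈ qr.2.2, ω b = qr.2.1} := by
    intro ω
    rw [filter_product (s := I) (t := I) (fun q => ∀ b ∈ q.2, ω b = q.1)
      (fun q => ∀ b ∈ q.2, ω b = q.1), card_product, crowdedSets]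
    push_cast
    ring
  have hpairs := sum_mul_card_filter (I ×ˢ I) (fun qr (ω : β → α) =>
    (∀ b ∈ qr.1.2, ω b = qr.1.1) ∧ ∀ b ∈ qr.2.2, ω b = qr.2.1) fun ω => ∏ b, p (ω b)
  simp only [hsq, hpairs]
  rw [← sum_product_powersetCard_pow]
  calc _ ≤ ∑ qr ∈ I ×ˢ I, (p qr.1.1 ^ m * p qr.2.1 ^ m
          + if qr.1.1 = qr.2.1 then p qr.1.1 ^ m * x ^ (m - #(qr.1.2 ∩ qr.2.2)) else 0) :=
        sum_le_sum fun qr hqr => sum_prod_filter_crowded_pair_le hp0 hp hx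
          (hcardI _ (mem_product.1 hqr).1) (hcardI _ (mem_product.1 hqr).2) _ _
    _ = (∑ q ∈ I, p q.1 ^ m) ^ 2
          + ∑ q ∈ I, p q.1 ^ m * ∑ T ∈ powersetCard m univ, x ^ (m - #(q.2 ∩ T)) := by
        rw [sum_add_distrib, sum_product (s := I) (t := I), sum_product (s := I) (t := I), sq,
          sum_mul_sum]
        congr 1
        refine sum_congr rfl fun q _ => ?_
        simp [I, sum_product, mul_sum]
    _ ≤ (∑ q ∈ I, p q.1 ^ m) ^ 2 + (∑ q ∈ I, p q.1 ^ m) * ((m : ℝ) + 1) ^ m := by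
        rw [sum_mul]
        exact (add_le_add_iff_left _).2 (sum_le_sum fun q hq => mul_le_mul_of_nonneg_left
          (sum_powersetCard_pow_sub_card_inter_le hx0 hxm (hcardI q hq))
          (pow_nonneg (hp0 _) _))

end Crowded

section BallsInBins

variable {n : ℕ} {p : Fin n → ℝ}

theorem le_maxLoad_of_mem_crowdedSets {m : ℕ} {ω : Fin n → Fin n} {q : Fin n × Finset (Fin n)}
    (hq : q ∈ crowdedSets m ω) : m ≤ maxLoad ω := by
  obtain ⟨hqm, hqω⟩ := mem_crowdedSets.1 hq
  calc m = #q.2 := hqm.symm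
    _ ≤ load ω q.1 := card_le_card fun b hb => mem_filter.2 ⟨mem_univ b, hqω b hb⟩
    _ ≤ maxLoad ω := le_sup (mem_univ q.1)

theorem sum_prod_mul_load (hp : ∑ i, p i = 1) (i : Fin n) :
    ∑ ω : Fin n → Fin n, (∏ b, p (ω b)) * (load ω i : ℝ) = n * p i := by
  have h := sum_mul_card_filter (univ : Finset (Fin n)) (fun b (ω : Fin n → Fin n) => ω b = i)
    fun ω => ∏ b, p (ω b)
  refine h.trans ?_
  rw [sum_congr rfl fun b _ => by simpa using sum_prod_filter_forall_mem_eq hp {b} fun _ => i]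
  simp

theorem mul_le_expMaxLoad (hp0 : ∀ i, 0 ≤ p i) (hp : ∑ i, p i = 1) (i : Fin n) :
    n * p i ≤ expMaxLoad p := by
  rw [← sum_prod_mul_load hp i, expMaxLoad]
  exact sum_le_sum fun ω _ => mul_le_mul_of_nonneg_left (by exact_mod_cast le_sup (mem_univ i))
    (prod_nonneg fun b _ => hp0 _)

theorem two_thirds_mul_le_expMaxLoad_of_le {m : ℕ} (hp0 : ∀ i, 0 ≤ p i) (hp : ∑ i, p i = 1)
    (hx : ∀ i, p i ≤ m / n) (hμ : 2 * ((m : ℝ) + 1) ^ m ≤ n.choose m * ∑ i, p i ^ m) :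
    2 / 3 * (m : ℝ) ≤ expMaxLoad p := by
  set μ := (n.choose m : ℝ) * ∑ i, p i ^ m
  set Z := fun ω : Fin n → Fin n => (#(crowdedSets m ω) : ℝ)
  set P := ∑ ω with Z ω ≠ 0, ∏ b, p (ω b)
  have hw : ∀ ω : Fin n → Fin n, 0 ≤ ∏ b, p (ω b) := fun ω => prod_nonneg fun b _ => hp0 _
  have hμ0 : 0 < μ := lt_of_lt_of_le (by positivity) hμ
  have hP0 : 0 ≤ P := sum_nonneg fun ω _ => hw ω
  have hxm : (Fintype.card (Fin n) : ℝ) * (m / n) ≤ m := by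
    rcases n.eq_zero_or_pos with rfl | hn
    · simp
    · rw [Fintype.card_fin, mul_div_cancel₀ _ (by positivity)]
  have hsecond : μ ^ 2 ≤ P * (μ ^ 2 + μ * ((m : ℝ) + 1) ^ m) := by
    have h := sq_sum_mul_le_sum_filter_ne_zero_mul_sum_mul_sq univ Z fun ω _ => hw ω
    rw [sum_prod_mul_card_crowdedSets hp, Fintype.card_fin] at h
    refine h.trans (mul_le_mul_of_nonneg_left ?_ hP0)
    simpa using sum_prod_mul_card_crowdedSets_sq_le hp0 hp (by positivity) hx hxm
  have hP : 2 / 3 ≤ P := by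
    refine le_of_mul_le_mul_left ?_ (by positivity : 0 < μ ^ 2)
    nlinarith [mul_le_mul_of_nonneg_left hμ (mul_nonneg hP0 hμ0.le)]
  calc 2 / 3 * (m : ℝ) ≤ P * m := by gcongr
    _ = ∑ ω with Z ω ≠ 0, (∏ b, p (ω b)) * m := sum_mul ..
    _ ≤ ∑ ω with Z ω ≠ 0, (∏ b, p (ω b)) * maxLoad ω := by
      refine sum_le_sum fun ω hω => mul_le_mul_of_nonneg_left ?_ (hw ω)
      obtain ⟨q, hq⟩ := card_ne_zero.1 (Nat.cast_ne_zero.1 (mem_filter.1 hω).2)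
      exact_mod_cast le_maxLoad_of_mem_crowdedSets hq
    _ ≤ expMaxLoad p := sum_le_sum_of_subset_of_nonneg (filter_subset _ _)
      fun ω _ _ => mul_nonneg (hw ω) (Nat.cast_nonneg _)

theorem two_mul_succ_pow_mul_pow_pred_le_choose {m : ℕ} (hm : 0 < m)
    (hmn : 2 * (m * (m + 1)) ^ m ≤ n) : 2 * (m + 1) ^ m * n ^ (m - 1) ≤ n.choose m := by
  have hmn' : m ≤ n :=
    calc m ≤ m * (m + 1) := Nat.le_mul_of_pos_right _ (by omega)
      _ ≤ (m * (m + 1)) ^ m := Nat.le_self_pow hm.ne' _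
      _ ≤ n := by omega
  refine Nat.le_of_mul_le_mul_left ?_ (Nat.pow_pos hm : 0 < m ^ m)
  calc m ^ m * (2 * (m + 1) ^ m * n ^ (m - 1)) = 2 * (m * (m + 1)) ^ m * n ^ (m - 1) := by
        rw [mul_pow]; ring
    _ ≤ n * n ^ (m - 1) := Nat.mul_le_mul_right _ hmn
    _ = n ^ m := by rw [← pow_succ', Nat.sub_add_cancel hm]
    _ ≤ m ^ m * n.choose m := Nat.pow_le_pow_mul_choose hmn'

theorem two_thirds_mul_le_expMaxLoad {m : ℕ} (hm : 0 < m) (hmn : 2 * (m * (m + 1)) ^ m ≤ n)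
    (hp0 : ∀ i, 0 ≤ p i) (hp : ∑ i, p i = 1) : 2 / 3 * (m : ℝ) ≤ expMaxLoad p := by
  by_cases hbig : ∃ i, (m : ℝ) ≤ n * p i
  · obtain ⟨i, hi⟩ := hbig
    linarith [mul_le_expMaxLoad hp0 hp i, (Nat.cast_nonneg m : (0 : ℝ) ≤ m)]
  push Not at hbig
  have hn : (0 : ℝ) < n := by exact_mod_cast lt_of_lt_of_le (by positivity) hmn
  refine two_thirds_mul_le_expMaxLoad_of_le hp0 hp (fun i => (le_div_iff₀' hn).2 (hbig i).le) ?_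
  have hpow : 1 / (n : ℝ) ^ (m - 1) ≤ ∑ i, p i ^ m := by
    obtain ⟨k, rfl⟩ : ∃ k, m = k + 1 := ⟨m - 1, by omega⟩
    simpa [hp] using pow_sum_div_card_le_sum_pow (s := univ) (fun i _ => hp0 i) k
  calc 2 * ((m : ℝ) + 1) ^ m
      = ((2 * (m + 1) ^ m * n ^ (m - 1) : ℕ) : ℝ) * (1 / (n : ℝ) ^ (m - 1)) := by
        push_cast; field_simp
    _ ≤ n.choose m * ∑ i, p i ^ m :=
        mul_le_mul (mod_cast two_mul_succ_pow_mul_pow_pred_le_choose hm hmn) hpow (by positivity)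
          (by positivity)

end BallsInBins

open Filter Real

theorem exists_nat_two_mul_pow_le_exp {y : ℝ} (hy : 4 ≤ y) (hlog : 1 ≤ log y)
    (hlog8 : 8 * log y ≤ y) :
    ∃ m : ℕ, 0 < m ∧ (2 * (m * (m + 1)) ^ m : ℝ) ≤ exp y ∧ y / log y ≤ 8 * m := by
  have hratio : 8 ≤ y / log y := (le_div_iff₀ (by linarith)).2 (by linarith)
  set m := ⌈y / log y / 8⌉₊
  have hm_ge : y / log y / 8 ≤ m := Nat.le_ceil _
  have hm_lt : (m : ℝ) < y / log y / 8 + 1 := Nat.ceil_lt_add_one (by positivity)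
  have hm1 : (1 : ℝ) ≤ m := by linarith
  have hm_le : (m : ℝ) * log y ≤ y / 4 := by
    have : (m : ℝ) ≤ y / log y / 4 := by linarith
    calc (m : ℝ) * log y ≤ y / log y / 4 * log y := by gcongr
      _ = y / 4 := by field_simp
  have hbase : (m : ℝ) * (m + 1) ≤ y ^ 3 := by
    have hmy : (m : ℝ) ≤ y / 4 := by nlinarith
    nlinarith [mul_le_mul hmy hmy (by positivity) (by positivity)]
  have hlogbase : log ((m : ℝ) * (m + 1)) ≤ 3 * log y := by
    have := log_le_log (by positivity) hbase
    rwa [log_pow, Nat.cast_ofNat] at this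
  refine ⟨m, by exact_mod_cast hm1, ?_, by linarith⟩
  rw [← exp_log (by positivity : (0 : ℝ) < 2 * (m * (m + 1)) ^ m), exp_le_exp, log_mul two_ne_zero
    (by positivity), log_pow]
  have := log_two_lt_d9
  nlinarith

theorem eventually_exists_nat_two_mul_pow_le :
    ∀ᶠ n : ℕ in atTop, ∃ m : ℕ, 0 < m ∧ 2 * (m * (m + 1)) ^ m ≤ n ∧
      log n / log (log n) ≤ 8 * m := by
  have hy : ∀ᶠ y : ℝ in atTop, 4 ≤ y ∧ 1 ≤ log y ∧ 8 * log y ≤ y := by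
    filter_upwards [eventually_ge_atTop 4, tendsto_log_atTop.eventually_ge_atTop 1,
      isLittleO_log_id_atTop.bound (by norm_num : (0 : ℝ) < 1 / 8)] with y hy hlog h8
    rw [norm_of_nonneg (by linarith), id, norm_of_nonneg (by linarith)] at h8
    exact ⟨hy, hlog, by linarith⟩
  filter_upwards [(tendsto_log_atTop.comp tendsto_natCast_atTop_atTop).eventually hy]
    with n ⟨hn4, hlog, hlog8⟩
  obtain ⟨m, hm, hexp, hdiv⟩ := exists_nat_two_mul_pow_le_exp hn4 hlog hlog8
  have hn : (0 : ℝ) < n := by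
    rcases n.eq_zero_or_pos with rfl | hn
    · simp at hn4; linarith
    · exact_mod_cast hn
  rw [Function.comp_apply, exp_log hn] at hexp
  exact ⟨m, hm, by exact_mod_cast hexp, hdiv⟩

open Real in
/-- For `n` balls thrown independently into `n` bins according to an arbitrary
probability vector `p`, the expected maximum load is at least
`k₀ · log n / log log n` for an absolute constant `k₀ > 0`, as `n → ∞`. -/
theorem expMaxLoad_lower_bound :
    ∃ k₀ > (0:ℝ), ∃ N : ℕ, ∀ n ≥ N, ∀ p : Fin n → ℝ,
      (∀ i, 0 ≤ p i) → ∑ i, p i = 1 →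
      expMaxLoad p ≥ k₀ * (log n / log (log n)) := by
  obtain ⟨N, hN⟩ := eventually_atTop.1 eventually_exists_nat_two_mul_pow_le
  refine ⟨1 / 12, by norm_num, N, fun n hn p hp0 hp => ?_⟩
  obtain ⟨m, hm, hmn, hlog⟩ := hN n hn
  calc 1 / 12 * (log n / log (log n)) ≤ 1 / 12 * (8 * m) := by gcongr
    _ ≤ expMaxLoad p := by linarith [two_thirds_mul_le_expMaxLoad hm hmn hp0 hp]
end
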